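/- Let m > 0, a ∈ (−m, m) and M := √(m² − a²). Then for every integer n ≥ 1, 1/4 − M² · d_n(M) · d_{n−1}(M) ≥ (1/4) e^{−2M} (2 − e^{−2M}). (This is the lower bound for the squared moduli |p_{j±1/2}|² = 1/4 − (m²−a²) d_{j+1/2} d_{j−1/2} of the eigenvalues of the operator W^a.) -/

import Mathlib

open Real Filter MeasureTheory

/-- Modified spherical Bessel functions of the first kind:
`i_0(z) = sinh z / z`, `i_1(z) = cosh z / z - sinh z / z²`,
`i_{n+1}(z) = i_{n-1}(z) - ((2n+1)/z) i_n(z)`. -/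
noncomputable def sbI : ℕ → ℝ → ℝ
  | 0 => fun z => Real.sinh z / z
  | 1 => fun z => Real.cosh z / z - Real.sinh z / z ^ 2
  | (n + 2) => fun z => sbI n z - ((2 * (n + 1 : ℝ) + 1) / z) * sbI (n + 1) z

/-- Modified spherical Bessel functions of the second kind:
`k_0(z) = e^{-z}/z`, `k_1(z) = e^{-z}(1/z + 1/z²)`,
`k_{n+1}(z) = k_{n-1}(z) + ((2n+1)/z) k_n(z)`. -/
noncomputable def sbK : ℕ → ℝ → ℝ
  | 0 => fun z => Real.exp (-z) / z
  | 1 => fun z => Real.exp (-z) * (1 / z + 1 / z ^ 2)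
  | (n + 2) => fun z => sbK n z + ((2 * (n + 1 : ℝ) + 1) / z) * sbK (n + 1) z

/-- `d_n(z) = z i_n(z) k_n(z) = I_{n+1/2}(z) K_{n+1/2}(z)`. -/
noncomputable def dCoef (n : ℕ) (z : ℝ) : ℝ := z * sbI n z * sbK n z

open Set Topology

/-- polynomials with k_n = e^{-z} Q n z / z^(n+1) -/
noncomputable def QP : ℕ → ℝ → ℝ
  | 0 => fun _ => 1
  | 1 => fun z => z + 1
  | (n + 2) => fun z => z ^ 2 * QP n z + (2 * (n + 1 : ℝ) + 1) * QP (n + 1) z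

lemma QP_two_step (n : ℕ) (z : ℝ) :
    QP (n + 2) z = z ^ 2 * QP n z + (2 * (n + 1 : ℝ) + 1) * QP (n + 1) z := rfl

lemma sbK_two_step (n : ℕ) (z : ℝ) :
    sbK (n + 2) z = sbK n z + ((2 * (n + 1 : ℝ) + 1) / z) * sbK (n + 1) z := rfl

lemma sbI_two_step (n : ℕ) (z : ℝ) :
    sbI (n + 2) z = sbI n z - ((2 * (n + 1 : ℝ) + 1) / z) * sbI (n + 1) z := rfl

lemma QP_cont (n : ℕ) : Continuous (QP n) := by
  induction n using Nat.strong_induction_on with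
  | _ n ih =>
    match n with
    | 0 => exact continuous_const
    | 1 => exact (continuous_id.add continuous_const)
    | (m + 2) =>
      have h1 := ih m (by omega)
      have h2 := ih (m + 1) (by omega)
      exact ((continuous_pow 2).mul h1).add (continuous_const.mul h2)

lemma QP_pos (n : ℕ) {z : ℝ} (hz : 0 < z) : 0 < QP n z := by
  induction n using Nat.strong_induction_on with
  | _ n ih =>
    match n with
    | 0 => norm_num [QP]
    | 1 => simp only [QP]; linarith
    | (m + 2) =>
      have h1 := ih m (by omega)
      have h2 := ih (m + 1) (by omega)
      have : (0:ℝ) < 2 * (m + 1 : ℝ) + 1 := by positivity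
      rw [QP_two_step]
      positivity

lemma sbK_eq_QP (n : ℕ) {z : ℝ} (hz : 0 < z) :
    sbK n z = Real.exp (-z) * QP n z / z ^ (n + 1) := by
  induction n using Nat.strong_induction_on with
  | _ n ih =>
    match n with
    | 0 => simp [sbK, QP]
    | 1 =>
      simp only [sbK, QP]
      field_simp
    | (m + 2) =>
      have h1 := ih m (by omega)
      have h2 := ih (m + 1) (by omega)
      rw [sbK_two_step, h1, h2, QP_two_step]
      have hzne : z ≠ 0 := ne_of_gt hz
      field_simp
      ring

lemma sbK_pos (n : ℕ) {z : ℝ} (hz : 0 < z) : 0 < sbK n z := by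
  rw [sbK_eq_QP n hz]
  have := QP_pos n hz
  positivity

lemma QP_ratio (n : ℕ) {z : ℝ} (hz : 0 < z) :
    (z + n + 1) * QP n z ≤ QP (n + 1) z ∧
      QP (n + 1) z ≤ (z + n + 1 + ((n:ℝ) + 1) ^ 2 / z) * QP n z := by
  induction n with
  | zero =>
    have h0 : (0:ℝ) < 1 / z := by positivity
    constructor
    · simp [QP]
    · simp only [QP]
      push_cast
      nlinarith
  | succ m ih =>
    obtain ⟨hA, hB⟩ := ih
    have hq := QP_pos m hz
    have hq1 := QP_pos (m + 1) hz
    have hrec := QP_two_step m z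
    constructor
    · rw [hrec]
      push_cast
      rcases le_or_gt z ((m:ℝ) + 1) with h | h
      · nlinarith
      · have key : (z - ((m:ℝ) + 1)) * QP (m + 1) z ≤ z ^ 2 * QP m z := by
          have h2 : (z - ((m:ℝ) + 1)) * QP (m + 1) z ≤
              (z - ((m:ℝ) + 1)) * ((z + m + 1 + ((m:ℝ) + 1) ^ 2 / z) * QP m z) :=
            mul_le_mul_of_nonneg_left hB (by linarith)
          refine h2.trans ?_
          have expand : (z - ((m:ℝ) + 1)) * (z + m + 1 + ((m:ℝ) + 1) ^ 2 / z) ≤ z ^ 2 := by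
            rw [div_eq_mul_inv]
            have e : (z - ((m:ℝ) + 1)) * (z + m + 1 + ((m:ℝ) + 1) ^ 2 * z⁻¹) =
                z ^ 2 - ((m:ℝ) + 1) ^ 3 * z⁻¹ := by
              field_simp
              ring
            rw [e]
            have : 0 < ((m:ℝ) + 1) ^ 3 * z⁻¹ := by positivity
            linarith
          nlinarith
        nlinarith
    · rw [hrec]
      push_cast
      have hzz : (0:ℝ) < z * (z + ↑m + 1) := by positivity
      rw [← mul_le_mul_iff_of_pos_right hzz]
      have hA3 : z ^ 3 * ((z + ↑m + 1) * QP m z) ≤ z ^ 3 * QP (m + 1) z :=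
        mul_le_mul_of_nonneg_left hA (by positivity)
      have e : (z + (↑m + 1) + 1 + (↑m + 1 + 1) ^ 2 / z) * QP (m + 1) z * (z * (z + ↑m + 1)) =
          ((z + ↑m + 2) * z + (↑m + 2) ^ 2) * QP (m + 1) z * (z + ↑m + 1) := by
        field_simp
        ring
      rw [e]
      nlinarith [hA3, mul_pos (show (0:ℝ) < (2 * ↑m + 3) * z + (↑m + 1) * (↑m + 2) ^ 2 by
        positivity) hq1]

lemma QP_R (n : ℕ) {z : ℝ} (hz : 0 < z) :
    0 < z ^ 2 * QP n z ^ 2 + (2 * (n:ℝ) + 2) * QP n z * QP (n + 1) z - QP (n + 1) z ^ 2 ∧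
      z ^ 2 * QP n z ^ 2 + (2 * (n:ℝ) + 2) * QP n z * QP (n + 1) z - QP (n + 1) z ^ 2 ≤
        (2 * (n:ℝ) + 1) * QP n z ^ 2 := by
  induction n with
  | zero =>
    simp only [QP]
    push_cast
    constructor <;> nlinarith
  | succ m ih =>
    obtain ⟨hL, hU⟩ := ih
    have hq := QP_pos m hz
    have hq1 := QP_pos (m + 1) hz
    have hA := (QP_ratio m hz).1
    have hrec := QP_two_step m z
    have hid : z ^ 2 * QP (m+1) z ^ 2 + (2 * ((m:ℝ)+1) + 2) * QP (m+1) z * QP (m+2) z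
        - QP (m+2) z ^ 2 = (2 * (m:ℝ) + 3) * QP (m+1) z ^ 2 -
        z ^ 2 * (z ^ 2 * QP m z ^ 2 + (2 * (m:ℝ) + 2) * QP m z * QP (m + 1) z
          - QP (m+1) z ^ 2) := by
      rw [hrec]; ring
    push_cast
    rw [hid]
    constructor
    · have h1 : z ^ 2 * (z ^ 2 * QP m z ^ 2 + (2 * (m:ℝ) + 2) * QP m z * QP (m + 1) z
          - QP (m+1) z ^ 2) ≤ z ^ 2 * ((2 * (m:ℝ) + 1) * QP m z ^ 2) :=
        mul_le_mul_of_nonneg_left hU (by positivity)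
      have h2 : z * QP m z < QP (m + 1) z := by nlinarith
      have h3 : (z * QP m z) ^ 2 < QP (m + 1) z ^ 2 :=
        pow_lt_pow_left₀ h2 (le_of_lt (mul_pos hz hq)) (by norm_num)
      nlinarith
    · nlinarith [mul_pos (mul_pos hz hz) hL]

lemma QP_cross (n : ℕ) {z : ℝ} (hz : 0 < z) :
    z ^ 2 * QP n z ^ 2 + QP (n + 1) z ^ 2 <
      2 * Real.sqrt (z ^ 2 + ((n:ℝ) + 1) ^ 2) * QP n z * QP (n + 1) z := by
  have hq := QP_pos n hz
  have hq1 := QP_pos (n + 1) hz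
  have hA := (QP_ratio n hz).1
  have hR := (QP_R n hz).1
  set W := Real.sqrt (z ^ 2 + ((n:ℝ) + 1) ^ 2) with hW
  have hWpos : 0 < W := Real.sqrt_pos.mpr (by positivity)
  have hW2 : W ^ 2 = z ^ 2 + ((n:ℝ) + 1) ^ 2 := Real.sq_sqrt (by positivity)
  have hup : QP (n + 1) z < (W + ((n:ℝ) + 1)) * QP n z := by
    have hsq : (QP (n + 1) z - ((n:ℝ) + 1) * QP n z) ^ 2 < (W * QP n z) ^ 2 := by
      have e : (W * QP n z) ^ 2 = (z ^ 2 + ((n:ℝ)+1) ^ 2) * QP n z ^ 2 := by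
        rw [mul_pow, hW2]
      nlinarith
    have := lt_of_pow_lt_pow_left₀ 2 (le_of_lt (mul_pos hWpos hq)) hsq
    linarith
  have hWle : W ≤ z + ((n:ℝ) + 1) := by
    rw [hW]
    calc Real.sqrt (z ^ 2 + ((n:ℝ) + 1) ^ 2) ≤ Real.sqrt ((z + ((n:ℝ) + 1)) ^ 2) :=
          Real.sqrt_le_sqrt (by nlinarith)
      _ = z + ((n:ℝ) + 1) := Real.sqrt_sq (by positivity)
  have hlo : (W - ((n:ℝ) + 1)) * QP n z < QP (n + 1) z := by nlinarith
  nlinarith [mul_pos hq hq1]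

lemma hasDerivAt_inv_aux {z : ℝ} (hz : 0 < z) (c : ℝ) :
    HasDerivAt (fun z : ℝ => c / z) (-c / z ^ 2) z := by
  have h := (hasDerivAt_const z c).div (hasDerivAt_id z) (ne_of_gt hz)
  refine h.congr_deriv ?_
  simp

lemma hasDerivAt_sbK (n : ℕ) {z : ℝ} (hz : 0 < z) :
    HasDerivAt (sbK n) (-sbK (n + 1) z + n * sbK n z / z) z := by
  have hzne : z ≠ 0 := ne_of_gt hz
  induction n using Nat.strong_induction_on with
  | _ n ih =>
    match n with
    | 0 =>
      have hexp : HasDerivAt (fun z : ℝ => Real.exp (-z)) (-Real.exp (-z)) z := by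
        simpa using ((hasDerivAt_id z).neg).exp
      have h := hexp.div (hasDerivAt_id z) hzne
      refine h.congr_deriv ?_
      have e0 : sbK 0 z = Real.exp (-z) / z := rfl
      have e1 : sbK (0 + 1) z = Real.exp (-z) * (1 / z + 1 / z ^ 2) := rfl
      rw [e0, e1]
      simp only [id_eq, Nat.cast_zero]
      field_simp
      ring
    | 1 =>
      have hexp : HasDerivAt (fun z : ℝ => Real.exp (-z)) (-Real.exp (-z)) z := by
        simpa using ((hasDerivAt_id z).neg).exp
      have ha := hasDerivAt_inv_aux hz 1
      have hb := (hasDerivAt_const z (1:ℝ)).div (hasDerivAt_pow 2 z) (pow_ne_zero 2 hzne)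
      have h := hexp.mul (ha.add hb)
      refine h.congr_deriv ?_
      have e1 : sbK 1 z = Real.exp (-z) * (1 / z + 1 / z ^ 2) := rfl
      have e0 : sbK (0 + 1) z = Real.exp (-z) * (1 / z + 1 / z ^ 2) := rfl
      rw [show (1:ℕ) + 1 = 0 + 2 from rfl, sbK_two_step 0, e0,
        show sbK 0 z = Real.exp (-z) / z from rfl]
      norm_num
      push_cast
      field_simp
      ring
    | (m + 2) =>
      have ih1 := ih m (by omega)
      have ih2 := ih (m + 1) (by omega)
      have hc : HasDerivAt (fun z : ℝ => (2 * ((m:ℝ) + 1) + 1) / z)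
          (-(2 * ((m:ℝ) + 1) + 1) / z ^ 2) z := hasDerivAt_inv_aux hz _
      have h := ih1.add (hc.mul ih2)
      refine h.congr_deriv ?_
      rw [show m + 2 + 1 = (m + 1) + 2 from rfl, sbK_two_step (m + 1),
        show m + 1 + 1 = m + 2 from rfl, sbK_two_step m]
      push_cast
      field_simp
      ring

lemma hasDerivAt_sbI (n : ℕ) {z : ℝ} (hz : 0 < z) :
    HasDerivAt (sbI n) (sbI (n + 1) z + n * sbI n z / z) z := by
  have hzne : z ≠ 0 := ne_of_gt hz
  induction n using Nat.strong_induction_on with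
  | _ n ih =>
    match n with
    | 0 =>
      have h := (Real.hasDerivAt_sinh z).div (hasDerivAt_id z) hzne
      refine h.congr_deriv ?_
      have e0 : sbI 0 z = Real.sinh z / z := rfl
      have e1 : sbI (0 + 1) z = Real.cosh z / z - Real.sinh z / z ^ 2 := rfl
      rw [e0, e1]
      simp only [id_eq, Nat.cast_zero]
      field_simp
      ring
    | 1 =>
      have ha := (Real.hasDerivAt_cosh z).div (hasDerivAt_id z) hzne
      have hb := (Real.hasDerivAt_sinh z).div (hasDerivAt_pow 2 z) (pow_ne_zero 2 hzne)
      have h := ha.sub hb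
      refine h.congr_deriv ?_
      have e1 : sbI 1 z = Real.cosh z / z - Real.sinh z / z ^ 2 := rfl
      have e0 : sbI (0 + 1) z = Real.cosh z / z - Real.sinh z / z ^ 2 := rfl
      rw [show (1:ℕ) + 1 = 0 + 2 from rfl, sbI_two_step 0, e0,
        show sbI 0 z = Real.sinh z / z from rfl]
      simp only [id_eq]
      norm_num
      push_cast
      field_simp
      ring
    | (m + 2) =>
      have ih1 := ih m (by omega)
      have ih2 := ih (m + 1) (by omega)
      have hc : HasDerivAt (fun z : ℝ => (2 * ((m:ℝ) + 1) + 1) / z)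
          (-(2 * ((m:ℝ) + 1) + 1) / z ^ 2) z := hasDerivAt_inv_aux hz _
      have h := ih1.sub (hc.mul ih2)
      refine h.congr_deriv ?_
      rw [show m + 2 + 1 = (m + 1) + 2 from rfl, sbI_two_step (m + 1),
        show m + 1 + 1 = m + 2 from rfl, sbI_two_step m]
      push_cast
      field_simp
      ring

/-- `(2n-1)!!` -/
noncomputable def DF : ℕ → ℝ
  | 0 => 1
  | (n + 1) => (2 * n + 1) * DF n

/-- `1/(2n+1)!!` -/
noncomputable def LC : ℕ → ℝ
  | 0 => 1
  | (n + 1) => LC n / (2 * n + 3)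

lemma DF_pos (n : ℕ) : 0 < DF n := by
  induction n with
  | zero => norm_num [DF]
  | succ m ih => have : (0:ℝ) < 2 * m + 1 := by positivity
                 simp only [DF]; positivity

lemma LC_pos (n : ℕ) : 0 < LC n := by
  induction n with
  | zero => norm_num [LC]
  | succ m ih => have : (0:ℝ) < 2 * m + 3 := by positivity
                 simp only [LC]; positivity

lemma LC_succ_eq (n : ℕ) : (2 * (n:ℝ) + 3) * LC (n + 1) = LC n := by
  have : (0:ℝ) < 2 * (n:ℝ) + 3 := by positivity
  simp only [LC]
  field_simp

lemma sinh_le_mul_cosh {z : ℝ} (hz : 0 ≤ z) : Real.sinh z ≤ z * Real.cosh z := by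
  have h1 : ∀ x ∈ Set.Ici (0:ℝ), HasDerivAt (fun y => y * Real.cosh y - Real.sinh y)
      (x * Real.sinh x) x := by
    intro x _
    have h := ((hasDerivAt_id x).mul (Real.hasDerivAt_cosh x)).sub (Real.hasDerivAt_sinh x)
    refine h.congr_deriv ?_
    simp [id]
  have hmono : MonotoneOn (fun y => y * Real.cosh y - Real.sinh y) (Set.Ici 0) := by
    apply monotoneOn_of_deriv_nonneg (convex_Ici 0)
    · exact fun x hx => ((h1 x hx).continuousAt).continuousWithinAt
    · intro x hx
      rw [interior_Ici] at hx
      exact ((h1 x (Set.mem_Ici.mpr (le_of_lt hx))).differentiableAt).differentiableWithinAt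
    · intro x hx
      rw [interior_Ici] at hx
      rw [(h1 x (Set.mem_Ici.mpr (le_of_lt hx))).deriv]
      exact mul_nonneg (le_of_lt hx) (Real.sinh_nonneg_iff.mpr (le_of_lt hx))
  have := hmono (Set.self_mem_Ici) (by exact hz) hz
  simpa using this

/-- crude global bound used for limits at `0⁺`. -/
lemma sbI_abs_le (n : ℕ) {z : ℝ} (hz : 0 < z) :
    |sbI n z| ≤ 2 * Real.cosh z * QP n z / z ^ n := by
  have hc := Real.cosh_pos (x := z)
  have hs : 0 ≤ Real.sinh z := Real.sinh_nonneg_iff.mpr (le_of_lt hz)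
  have hsc : Real.sinh z ≤ z * Real.cosh z := sinh_le_mul_cosh (le_of_lt hz)
  induction n using Nat.strong_induction_on with
  | _ n ih =>
    match n with
    | 0 =>
      have e : sbI 0 z = Real.sinh z / z := rfl
      rw [e, abs_of_nonneg (by positivity)]
      simp only [QP, pow_zero]
      rw [div_le_div_iff₀ hz (by norm_num : (0:ℝ) < 1)]
      nlinarith
    | 1 =>
      have e : sbI 1 z = Real.cosh z / z - Real.sinh z / z ^ 2 := rfl
      rw [e]
      have h1 : |Real.cosh z / z - Real.sinh z / z ^ 2| ≤ Real.cosh z / z + Real.sinh z / z ^ 2 := by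
        refine (abs_sub _ _).trans ?_
        rw [abs_of_nonneg (by positivity), abs_of_nonneg (by positivity)]
      refine h1.trans ?_
      simp only [QP, pow_one]
      rw [div_add_div _ _ (ne_of_gt hz) (by positivity : z ^ 2 ≠ 0),
        div_le_div_iff₀ (by positivity) hz]
      nlinarith [mul_le_mul_of_nonneg_left hsc hz.le, mul_le_mul_of_nonneg_left hsc (mul_pos hz hz).le,
        mul_pos hz hc, mul_pos (mul_pos hz hz) hc]
    | (m + 2) =>
      have ih1 := ih m (by omega)
      have ih2 := ih (m + 1) (by omega)
      rw [sbI_two_step, QP_two_step]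
      have hco : (0:ℝ) < 2 * ((m:ℝ) + 1) + 1 := by positivity
      have h1 : |sbI m z - ((2 * ((m:ℝ) + 1) + 1) / z) * sbI (m + 1) z| ≤
          |sbI m z| + ((2 * ((m:ℝ) + 1) + 1) / z) * |sbI (m + 1) z| := by
        refine (abs_sub _ _).trans ?_
        rw [abs_mul, abs_of_nonneg (by positivity : (0:ℝ) ≤ (2 * ((m:ℝ) + 1) + 1) / z)]
      refine h1.trans ?_
      have h2 : ((2 * ((m:ℝ) + 1) + 1) / z) * |sbI (m + 1) z| ≤
          ((2 * ((m:ℝ) + 1) + 1) / z) * (2 * Real.cosh z * QP (m + 1) z / z ^ (m + 1)) :=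
        mul_le_mul_of_nonneg_left ih2 (by positivity)
      have hQm := QP_pos m hz
      have hQm1 := QP_pos (m + 1) hz
      have e : |sbI m z| + ((2 * ((m:ℝ) + 1) + 1) / z) * (2 * Real.cosh z * QP (m+1) z / z ^ (m+1))
          = |sbI m z| + 2 * Real.cosh z * ((2 * ((m:ℝ) + 1) + 1) * QP (m + 1) z) / z ^ (m + 2) := by
        field_simp
        ring
      have goal2 : |sbI m z| ≤ 2 * Real.cosh z * (z ^ 2 * QP m z) / z ^ (m + 2) := by
        refine ih1.trans (le_of_eq ?_)
        field_simp
        ring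
      calc |sbI m z| + ((2 * ((m:ℝ) + 1) + 1) / z) * |sbI (m + 1) z|
          ≤ |sbI m z| + ((2 * ((m:ℝ)+1)+1)/z) * (2 * Real.cosh z * QP (m+1) z / z ^ (m+1)) := by
            linarith
        _ = |sbI m z| + 2 * Real.cosh z * ((2 * ((m:ℝ) + 1) + 1) * QP (m + 1) z) / z ^ (m + 2) := e
        _ ≤ 2 * Real.cosh z * (z ^ 2 * QP m z) / z ^ (m + 2)
            + 2 * Real.cosh z * ((2 * ((m:ℝ) + 1) + 1) * QP (m + 1) z) / z ^ (m + 2) := by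
            linarith [goal2]
        _ = 2 * Real.cosh z * (z ^ 2 * QP m z + (2 * ((m:ℝ) + 1) + 1) * QP (m + 1) z)
            / z ^ (m + 2) := by ring

/-- If `f' ≥ 0` on `(0,∞)` and `f → 0` at `0⁺`, then `f ≥ 0` on `(0,∞)`. -/
lemma nonneg_on_pos (f F : ℝ → ℝ) (hd : ∀ z, 0 < z → HasDerivAt f (F z) z)
    (hF : ∀ z, 0 < z → 0 ≤ F z) (hlim : Tendsto f (𝓝[>] (0:ℝ)) (𝓝 0)) :
    ∀ z, 0 < z → 0 ≤ f z := by
  have hmono : MonotoneOn f (Set.Ioi 0) := by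
    apply monotoneOn_of_deriv_nonneg (convex_Ioi 0)
    · exact fun x hx => ((hd x hx).continuousAt).continuousWithinAt
    · intro x hx
      rw [interior_Ioi] at hx
      exact ((hd x hx).differentiableAt).differentiableWithinAt
    · intro x hx
      rw [interior_Ioi] at hx
      rw [(hd x hx).deriv]
      exact hF x hx
  intro z hz
  have hev : ∀ᶠ w in 𝓝[>] (0:ℝ), f w ≤ f z := by
    filter_upwards [Ioo_mem_nhdsGT hz] with w hw
    exact hmono hw.1 hz (le_of_lt hw.2)
  exact le_of_tendsto hlim hev

/-- derivative of `z^(n+2) * sbI (n+1) z` is `z^(n+2) * sbI n z`. -/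
lemma hasDerivAt_pow_sbI (n : ℕ) {z : ℝ} (hz : 0 < z) :
    HasDerivAt (fun w => w ^ (n + 2) * sbI (n + 1) w) (z ^ (n + 2) * sbI n z) z := by
  have h := (hasDerivAt_pow (n + 2) z).mul (hasDerivAt_sbI (n + 1) hz)
  refine h.congr_deriv ?_
  rw [show n + 1 + 1 = n + 2 from rfl, sbI_two_step n]
  have hzne := ne_of_gt hz
  push_cast
  field_simp
  ring

lemma tendsto_pow_sbI (n : ℕ) :
    Tendsto (fun w => w ^ (n + 2) * sbI (n + 1) w) (𝓝[>] (0:ℝ)) (𝓝 0) := by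
  have hb : Tendsto (fun w : ℝ => 2 * w * Real.cosh w * QP (n + 1) w) (𝓝[>] (0:ℝ)) (𝓝 0) := by
    have hc : Continuous (fun w : ℝ => 2 * w * Real.cosh w * QP (n + 1) w) := by
      have := QP_cont (n + 1)
      continuity
    have := (hc.tendsto 0).mono_left (nhdsWithin_le_nhds (s := Set.Ioi (0:ℝ)))
    simpa using this
  apply squeeze_zero_norm' _ hb
  filter_upwards [self_mem_nhdsWithin] with w hw
  have hw' : (0:ℝ) < w := hw
  have h1 := sbI_abs_le (n + 1) hw'
  have h2 : |w ^ (n + 2) * sbI (n + 1) w| = w ^ (n + 2) * |sbI (n + 1) w| := by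
    rw [abs_mul, abs_of_nonneg (by positivity)]
  rw [Real.norm_eq_abs, h2]
  calc w ^ (n + 2) * |sbI (n + 1) w|
      ≤ w ^ (n + 2) * (2 * Real.cosh w * QP (n + 1) w / w ^ (n + 1)) := by
        exact mul_le_mul_of_nonneg_left h1 (by positivity)
    _ = 2 * w * Real.cosh w * QP (n + 1) w := by
        rw [show n + 2 = (n + 1) + 1 from rfl, pow_succ]
        field_simp

lemma sbI_bounds (n : ℕ) : ∀ z : ℝ, 0 < z →
    LC n * z ^ n ≤ sbI n z ∧ sbI n z ≤ LC n * z ^ n * Real.cosh z := by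
  induction n with
  | zero =>
    intro z hz
    have hs : z ≤ Real.sinh z := Real.self_le_sinh_iff.mpr (le_of_lt hz)
    have hsc := sinh_le_mul_cosh (le_of_lt hz)
    constructor
    · show LC 0 * z ^ 0 ≤ Real.sinh z / z
      simp only [LC, pow_zero, mul_one]
      rw [le_div_iff₀ hz]
      linarith
    · show Real.sinh z / z ≤ LC 0 * z ^ 0 * Real.cosh z
      simp only [LC, pow_zero, mul_one, one_mul]
      rw [div_le_iff₀ hz]
      linarith
  | succ n ih =>
    have lower : ∀ z, 0 < z → 0 ≤ z ^ (n + 2) * sbI (n + 1) z - LC (n + 1) * z ^ (2 * n + 3) := by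
      apply nonneg_on_pos _
        (fun z => z ^ (n + 2) * sbI n z - (2 * (n:ℝ) + 3) * LC (n + 1) * z ^ (2 * n + 2))
      · intro z hz
        have hpow := (hasDerivAt_pow (2 * n + 3) z).const_mul (LC (n + 1))
        have h := (hasDerivAt_pow_sbI n hz).sub hpow
        refine h.congr_deriv ?_
        simp only [show 2 * n + 3 - 1 = 2 * n + 2 from by omega]
        push_cast
        ring
      · intro z hz
        have h1 := (ih z hz).1
        have h2 : z ^ (n + 2) * (LC n * z ^ n) = LC n * z ^ (2 * n + 2) := by
          rw [show 2 * n + 2 = (n + 2) + n by omega, pow_add]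
          ring
        have h3 := mul_le_mul_of_nonneg_left h1 (le_of_lt (pow_pos hz (n + 2)))
        rw [h2, ← LC_succ_eq n] at h3
        linarith
      · have h1 := tendsto_pow_sbI n
        have h2 : Tendsto (fun w : ℝ => LC (n + 1) * w ^ (2 * n + 3)) (𝓝[>] (0:ℝ)) (𝓝 0) := by
          have hc : Continuous (fun w : ℝ => LC (n + 1) * w ^ (2 * n + 3)) := by continuity
          have := (hc.tendsto 0).mono_left (nhdsWithin_le_nhds (s := Set.Ioi (0:ℝ)))
          simpa using this
        simpa using h1.sub h2
    have upper : ∀ z, 0 < z →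
        0 ≤ LC (n + 1) * (z ^ (2 * n + 3) * Real.cosh z) - z ^ (n + 2) * sbI (n + 1) z := by
      apply nonneg_on_pos _ (fun z => LC (n + 1) * ((2 * (n:ℝ) + 3) * z ^ (2 * n + 2) *
        Real.cosh z + z ^ (2 * n + 3) * Real.sinh z) - z ^ (n + 2) * sbI n z)
      · intro z hz
        have ha := ((hasDerivAt_pow (2 * n + 3) z).mul (Real.hasDerivAt_cosh z)).const_mul
          (LC (n + 1))
        have hb := hasDerivAt_pow_sbI n hz
        have h := ha.sub hb
        refine h.congr_deriv ?_
        simp only [show 2 * n + 3 - 1 = 2 * n + 2 from by omega]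
        push_cast
        ring
      · intro z hz
        have h1 := (ih z hz).2
        have hcosh := Real.cosh_pos (x := z)
        have hsinh : 0 ≤ Real.sinh z := Real.sinh_nonneg_iff.mpr (le_of_lt hz)
        have h3 := mul_le_mul_of_nonneg_left h1 (le_of_lt (pow_pos hz (n + 2)))
        have h2 : z ^ (n + 2) * (LC n * z ^ n * Real.cosh z)
            = (2 * (n:ℝ) + 3) * LC (n + 1) * z ^ (2 * n + 2) * Real.cosh z := by
          rw [← LC_succ_eq n, show 2 * n + 2 = (n + 2) + n by omega, pow_add]
          ring
        rw [h2] at h3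
        have h4 : 0 ≤ LC (n + 1) * (z ^ (2 * n + 3) * Real.sinh z) := by
          have := LC_pos (n + 1)
          positivity
        nlinarith
      · have h1 := tendsto_pow_sbI n
        have hc : Continuous (fun w : ℝ => LC (n + 1) * (w ^ (2 * n + 3) * Real.cosh w)) := by
          continuity
        have h2 : Tendsto (fun w : ℝ => LC (n + 1) * (w ^ (2 * n + 3) * Real.cosh w))
            (𝓝[>] (0:ℝ)) (𝓝 0) := by
          have := (hc.tendsto 0).mono_left (nhdsWithin_le_nhds (s := Set.Ioi (0:ℝ)))
          simpa using this
        simpa using h2.sub h1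
    intro z hz
    have hL := lower z hz
    have hU := upper z hz
    have hzp := pow_pos hz (n + 2)
    have hsplit : z ^ (2 * n + 3) = z ^ (n + 2) * z ^ (n + 1) := by
      rw [← pow_add]; congr 1; omega
    constructor
    · rw [← sub_nonneg]
      have : z ^ (n + 2) * sbI (n + 1) z - LC (n + 1) * z ^ (2 * n + 3)
          = z ^ (n + 2) * (sbI (n + 1) z - LC (n + 1) * z ^ (n + 1)) := by
        rw [hsplit]; ring
      rw [this] at hL
      nlinarith [hL, hzp]
    · rw [← sub_nonneg]
      have : LC (n + 1) * (z ^ (2 * n + 3) * Real.cosh z) - z ^ (n + 2) * sbI (n + 1) z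
          = z ^ (n + 2) * (LC (n + 1) * z ^ (n + 1) * Real.cosh z - sbI (n + 1) z) := by
        rw [hsplit]; ring
      rw [this] at hU
      nlinarith [hU, hzp]

lemma sbI_pos (n : ℕ) {z : ℝ} (hz : 0 < z) : 0 < sbI n z :=
  lt_of_lt_of_le (by have := LC_pos n; positivity) ((sbI_bounds n z hz).1)

/-- Wronskian identity. -/
lemma wronskian (n : ℕ) {z : ℝ} (hz : 0 < z) :
    sbI n z * sbK (n + 1) z + sbI (n + 1) z * sbK n z = 1 / z ^ 2 := by
  have hzne := ne_of_gt hz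
  induction n with
  | zero =>
    show Real.sinh z / z * (Real.exp (-z) * (1 / z + 1 / z ^ 2))
        + (Real.cosh z / z - Real.sinh z / z ^ 2) * (Real.exp (-z) / z) = 1 / z ^ 2
    have he : Real.exp (-z) * (Real.sinh z + Real.cosh z) = 1 := by
      rw [Real.sinh_add_cosh, ← Real.exp_add, neg_add_cancel, Real.exp_zero]
    have expand : Real.sinh z / z * (Real.exp (-z) * (1 / z + 1 / z ^ 2))
        + (Real.cosh z / z - Real.sinh z / z ^ 2) * (Real.exp (-z) / z)
        = Real.exp (-z) * (Real.sinh z + Real.cosh z) / z ^ 2 := by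
      generalize Real.exp (-z) = E
      field_simp
      ring
    rw [expand, he]
  | succ m ih =>
    rw [show m + 1 + 1 = m + 2 from rfl, sbI_two_step m, sbK_two_step m]
    ring_nf
    ring_nf at ih
    nlinarith [ih]

lemma QP_ge_DF (n : ℕ) {z : ℝ} (hz : 0 < z) : DF n ≤ QP n z := by
  induction n using Nat.strong_induction_on with
  | _ n ih =>
    match n with
    | 0 => simp [QP, DF]
    | 1 => show DF 1 ≤ z + 1
           simp [DF]; linarith
    | (m + 2) =>
      have h1 := ih (m + 1) (by omega)
      have hq := QP_pos m hz
      have : DF (m + 2) = (2 * ((m:ℝ) + 1) + 1) * DF (m + 1) := by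
        show (2 * (↑(m+1):ℝ) + 1) * DF (m + 1) = _
        push_cast; ring
      rw [QP_two_step, this]
      nlinarith [DF_pos (m + 1), mul_le_mul_of_nonneg_left h1
        (show (0:ℝ) ≤ 2 * ((m:ℝ) + 1) + 1 by positivity), sq_nonneg z]

lemma QP_le_DF (n : ℕ) {z : ℝ} (hz : 0 < z) : QP n z ≤ DF n * (1 + z) ^ n := by
  induction n using Nat.strong_induction_on with
  | _ n ih =>
    match n with
    | 0 => simp [QP, DF]
    | 1 => show z + 1 ≤ DF 1 * (1 + z) ^ 1
           simp [DF]; linarith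
    | (m + 2) =>
      have h1 := ih m (by omega)
      have h2 := ih (m + 1) (by omega)
      have hd := DF_pos m
      have hd1 := DF_pos (m + 1)
      have hp : (0:ℝ) < (1 + z) ^ m := by positivity
      have e2 : DF (m + 2) = (2 * ((m:ℝ) + 1) + 1) * DF (m + 1) := by
        show (2 * (↑(m+1):ℝ) + 1) * DF (m + 1) = _
        push_cast; ring
      have e1 : DF (m + 1) = (2 * (m:ℝ) + 1) * DF m := rfl
      rw [QP_two_step, e2]
      have key : z ^ 2 * (DF m * (1 + z) ^ m)
          + (2 * ((m:ℝ) + 1) + 1) * (DF (m + 1) * (1 + z) ^ (m + 1))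
          ≤ (2 * ((m:ℝ) + 1) + 1) * DF (m + 1) * (1 + z) ^ (m + 2) := by
        rw [e1]
        have hpow1 : (1 + z) ^ (m + 1) = (1 + z) ^ m * (1 + z) := pow_succ _ _
        have hpow2 : (1 + z) ^ (m + 2) = (1 + z) ^ m * (1 + z) ^ 2 := by
          rw [← pow_add]
        rw [hpow1, hpow2]
        -- divide by (1+z)^m: z^2*DFm + (2m+3)(2m+1)DFm (1+z) ≤ (2m+3)(2m+1)DFm (1+z)^2
        have base : z ^ 2 + (2 * ((m:ℝ) + 1) + 1) * (2 * (m:ℝ) + 1) * (1 + z)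
            ≤ (2 * ((m:ℝ) + 1) + 1) * (2 * (m:ℝ) + 1) * (1 + z) ^ 2 := by
          have hm : (0:ℝ) ≤ (m:ℝ) := Nat.cast_nonneg m
          nlinarith [hz, mul_pos hz hz, hm, mul_nonneg hm hz.le,
            mul_nonneg (mul_nonneg hm hm) hz.le, mul_nonneg hm (mul_pos hz hz).le]
        nlinarith [mul_le_mul_of_nonneg_right base (le_of_lt (mul_pos hd hp)), hp, hd]
      calc z ^ 2 * QP m z + (2 * ((m:ℝ) + 1) + 1) * QP (m + 1) z
          ≤ z ^ 2 * (DF m * (1 + z) ^ m)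
            + (2 * ((m:ℝ) + 1) + 1) * (DF (m + 1) * (1 + z) ^ (m + 1)) := by
            have := mul_le_mul_of_nonneg_left h1 (le_of_lt (mul_pos hz hz))
            nlinarith [mul_le_mul_of_nonneg_left h2
              (show (0:ℝ) ≤ 2 * ((m:ℝ) + 1) + 1 by positivity), sq_nonneg z,
              mul_le_mul_of_nonneg_left h1 (sq_nonneg z)]
        _ ≤ _ := key

lemma LC_DF (n : ℕ) : LC n * DF n * (2 * (n:ℝ) + 1) = 1 := by
  induction n with
  | zero => norm_num [LC, DF]
  | succ m ih =>
    have e1 : DF (m + 1) = (2 * (m:ℝ) + 1) * DF m := rfl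
    have e2 : LC (m + 1) = LC m / (2 * (m:ℝ) + 3) := rfl
    rw [e1, e2]
    push_cast
    have h3 : (2 * (m:ℝ) + 3) ≠ 0 := by positivity
    field_simp
    linear_combination (2 * (m:ℝ) + 3) * ih

/-- k-side crossing inequality -/
lemma sbK_cross (n : ℕ) {z : ℝ} (hz : 0 < z) :
    z * (sbK n z ^ 2 + sbK (n + 1) z ^ 2) <
      2 * Real.sqrt (z ^ 2 + ((n:ℝ) + 1) ^ 2) * (sbK n z * sbK (n + 1) z) := by
  have hq := QP_cross n hz
  have hE : (0:ℝ) < Real.exp (-z) := Real.exp_pos _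
  have hzp : (0:ℝ) < z ^ (2 * n + 3) := pow_pos hz _
  have e1 : z * (sbK n z ^ 2 + sbK (n + 1) z ^ 2)
      = Real.exp (-z) ^ 2 / z ^ (2 * n + 3) * (z ^ 2 * QP n z ^ 2 + QP (n + 1) z ^ 2) := by
    rw [sbK_eq_QP n hz, sbK_eq_QP (n + 1) hz]
    rw [show 2 * n + 3 = (n + 1) + (n + 2) by omega, pow_add]
    field_simp
    ring
  have e2 : 2 * Real.sqrt (z ^ 2 + ((n:ℝ) + 1) ^ 2) * (sbK n z * sbK (n + 1) z)
      = Real.exp (-z) ^ 2 / z ^ (2 * n + 3) *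
        (2 * Real.sqrt (z ^ 2 + ((n:ℝ) + 1) ^ 2) * QP n z * QP (n + 1) z) := by
    rw [sbK_eq_QP n hz, sbK_eq_QP (n + 1) hz]
    rw [show 2 * n + 3 = (n + 1) + (n + 2) by omega, pow_add]
    field_simp
    ring
  rw [e1, e2]
  apply mul_lt_mul_of_pos_left hq
  positivity

/-- `Ψ_n > 0` holds in a right neighbourhood of `0`. -/
lemma psi_pos_small (n : ℕ) : ∃ ε > 0, ∀ z : ℝ, 0 < z → z ≤ ε →
    sbI (n + 1) z * sbK (n + 1) z < sbI n z * sbK n z := by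
  -- continuity: (2n+1) cosh z (1+z)^(n+1) < 2n+3 for small z
  have hc : Continuous (fun z : ℝ => (2 * (n:ℝ) + 1) * Real.cosh z * (1 + z) ^ (n + 1)) := by
    continuity
  have h0 : (fun z : ℝ => (2 * (n:ℝ) + 1) * Real.cosh z * (1 + z) ^ (n + 1)) 0
      = 2 * (n:ℝ) + 1 := by simp
  have hlt : (2 * (n:ℝ) + 1) < 2 * (n:ℝ) + 3 := by linarith
  have hev : ∀ᶠ z in 𝓝 (0:ℝ),
      (2 * (n:ℝ) + 1) * Real.cosh z * (1 + z) ^ (n + 1) < 2 * (n:ℝ) + 3 := by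
    have h := hc.tendsto 0
    rw [show ((2 * (n:ℝ) + 1) * Real.cosh 0 * (1 + 0) ^ (n + 1)) = 2 * (n:ℝ) + 1 by simp] at h
    exact h.eventually_lt_const hlt
  obtain ⟨ε, hε, hball⟩ := Metric.eventually_nhds_iff.mp hev
  refine ⟨ε / 2, by positivity, fun z hz hzε => ?_⟩
  have hF : (2 * (n:ℝ) + 1) * Real.cosh z * (1 + z) ^ (n + 1) < 2 * (n:ℝ) + 3 := by
    apply hball
    rw [Real.dist_eq, sub_zero, abs_of_pos hz]
    linarith
  -- lower bound for g_n
  have hIl := (sbI_bounds n z hz).1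
  have hIu := (sbI_bounds (n + 1) z hz).2
  have hKn := sbK_eq_QP n hz
  have hKn1 := sbK_eq_QP (n + 1) hz
  have hE : (0:ℝ) < Real.exp (-z) := Real.exp_pos _
  have hLn := LC_pos n
  have hLn1 := LC_pos (n + 1)
  have hDn := DF_pos n
  have hDn1 := DF_pos (n + 1)
  have hKpos := sbK_pos n hz
  have hKpos1 := sbK_pos (n + 1) hz
  have hcosh := Real.cosh_pos (x := z)
  -- g_n ≥ E/( (2n+1) z )
  have hg : Real.exp (-z) / ((2 * (n:ℝ) + 1) * z) ≤ sbI n z * sbK n z := by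
    have h1 : Real.exp (-z) * DF n / z ^ (n + 1) ≤ sbK n z := by
      rw [hKn]
      gcongr
      exact QP_ge_DF n hz
    calc Real.exp (-z) / ((2 * (n:ℝ) + 1) * z)
        = (LC n * z ^ n) * (Real.exp (-z) * DF n / z ^ (n + 1)) := by
          have := LC_DF n
          rw [pow_succ]
          field_simp
          linear_combination (-1 : ℝ) * this
      _ ≤ (LC n * z ^ n) * sbK n z := by
          apply mul_le_mul_of_nonneg_left h1 (by positivity)
      _ ≤ sbI n z * sbK n z := by
          apply mul_le_mul_of_nonneg_right hIl (le_of_lt hKpos)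
  -- g_{n+1} ≤ E cosh z (1+z)^{n+1} / ((2n+3) z)
  have hgu : sbI (n + 1) z * sbK (n + 1) z ≤
      Real.exp (-z) * Real.cosh z * (1 + z) ^ (n + 1) / ((2 * (n:ℝ) + 3) * z) := by
    have h1 : sbK (n + 1) z ≤ Real.exp (-z) * (DF (n + 1) * (1 + z) ^ (n + 1)) / z ^ (n + 2) := by
      rw [hKn1]
      gcongr
      exact QP_le_DF (n + 1) hz
    have h2 : sbI (n + 1) z * sbK (n + 1) z ≤
        (LC (n + 1) * z ^ (n + 1) * Real.cosh z) *
          (Real.exp (-z) * (DF (n + 1) * (1 + z) ^ (n + 1)) / z ^ (n + 2)) := by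
      apply mul_le_mul hIu h1 (le_of_lt hKpos1) (by positivity)
    refine h2.trans (le_of_eq ?_)
    have hLD := LC_DF (n + 1)
    push_cast at hLD
    rw [pow_succ (z) (n+1)]
    field_simp
    linear_combination hLD
  -- combine
  have hmid : Real.exp (-z) * Real.cosh z * (1 + z) ^ (n + 1) / ((2 * (n:ℝ) + 3) * z)
      < Real.exp (-z) / ((2 * (n:ℝ) + 1) * z) := by
    rw [div_lt_div_iff₀ (by positivity) (by positivity)]
    have hp : (0:ℝ) < (1 + z) ^ (n + 1) := by positivity
    nlinarith [mul_lt_mul_of_pos_left hF (mul_pos hE hz)]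
  linarith

set_option maxHeartbeats 1000000 in
/-- the key monotonicity: `d_{n+1}(z) < d_n(z)`. -/
lemma psi_pos (n : ℕ) {z : ℝ} (hz : 0 < z) :
    sbI (n + 1) z * sbK (n + 1) z < sbI n z * sbK n z := by
  by_contra hcon
  push_neg at hcon
  set Ψ : ℝ → ℝ := fun w => sbI n w * sbK n w - sbI (n + 1) w * sbK (n + 1) w with hΨ
  have hΨz : Ψ z ≤ 0 := by simp only [hΨ]; linarith
  obtain ⟨ε, hε, hsmall⟩ := psi_pos_small n
  have hΨsmall : ∀ t : ℝ, 0 < t → t ≤ ε → 0 < Ψ t := by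
    intro t ht htε
    have := hsmall t ht htε
    simp only [hΨ]
    linarith
  rcases le_or_gt z ε with hze | hze
  · exact absurd hΨz (not_le.mpr (hΨsmall z hz hze))
  -- derivative of Ψ
  set D : ℝ → ℝ := fun w =>
    ((sbI (n + 1) w + n * sbI n w / w) * sbK n w
      + sbI n w * (-sbK (n + 1) w + n * sbK n w / w))
    - ((sbI (n + 1 + 1) w + ((n + 1 : ℕ) : ℝ) * sbI (n + 1) w / w) * sbK (n + 1) w
      + sbI (n + 1) w * (-sbK (n + 1 + 1) w + ((n + 1 : ℕ) : ℝ) * sbK (n + 1) w / w)) with hD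
  have hΨd : ∀ w : ℝ, 0 < w → HasDerivAt Ψ (D w) w := by
    intro w hw
    exact ((hasDerivAt_sbI n hw).mul (hasDerivAt_sbK n hw)).sub
      ((hasDerivAt_sbI (n + 1) hw).mul (hasDerivAt_sbK (n + 1) hw))
  have hΨcont : ContinuousOn Ψ (Set.Icc ε z) := by
    intro w hw
    exact ((hΨd w (lt_of_lt_of_le hε hw.1)).continuousAt).continuousWithinAt
  -- compact set of nonpositivity
  set S : Set ℝ := Set.Icc ε z ∩ Ψ ⁻¹' (Set.Iic 0) with hS
  have hScl : IsClosed S := hΨcont.preimage_isClosed_of_isClosed isClosed_Icc isClosed_Iic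
  have hScp : IsCompact S := isCompact_Icc.of_isClosed_subset hScl Set.inter_subset_left
  have hzS : z ∈ S := ⟨⟨le_of_lt hze, le_refl z⟩, hΨz⟩
  have hSne : S.Nonempty := ⟨z, hzS⟩
  set c := sInf S with hc
  have hcS : c ∈ S := hScp.sInf_mem hSne
  have hcε : ε ≤ c := hcS.1.1
  have hcz : c ≤ z := hcS.1.2
  have hc0 : 0 < c := lt_of_lt_of_le hε hcε
  have hεnotS : ε ∉ S := by
    intro h
    exact absurd h.2 (not_le.mpr (hΨsmall ε hε (le_refl ε)))
  have hεc : ε < c := lt_of_le_of_ne hcε (fun h => hεnotS (h ▸ hcS))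
  have hbelow : ∀ t : ℝ, 0 < t → t < c → 0 < Ψ t := by
    intro t ht htc
    rcases le_or_gt t ε with h | h
    · exact hΨsmall t ht h
    · by_contra hneg
      push_neg at hneg
      have htS : t ∈ S := ⟨⟨le_of_lt h, le_of_lt (lt_of_lt_of_le htc hcz)⟩, hneg⟩
      exact absurd (csInf_le hScp.bddBelow htS) (not_le.mpr htc)
  have hΨc0 : Ψ c = 0 := by
    refine le_antisymm hcS.2 ?_
    have htendsto : Tendsto Ψ (𝓝[<] c) (𝓝 (Ψ c)) :=
      ((hΨd c hc0).continuousAt.tendsto).mono_left nhdsWithin_le_nhds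
    refine ge_of_tendsto htendsto ?_
    filter_upwards [Ioo_mem_nhdsLT (show (0:ℝ) < c from hc0)] with t ht
    exact le_of_lt (hbelow t ht.1 ht.2)
  -- at the crossing point
  set iN := sbI n c
  set iN1 := sbI (n + 1) c
  set kN := sbK n c
  set kN1 := sbK (n + 1) c
  have hiN : 0 < iN := sbI_pos n hc0
  have hiN1 : 0 < iN1 := sbI_pos (n + 1) hc0
  have hkN : 0 < kN := sbK_pos n hc0
  have hkN1 : 0 < kN1 := sbK_pos (n + 1) hc0
  have hg : iN1 * kN1 = iN * kN := by
    have : Ψ c = iN * kN - iN1 * kN1 := rfl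
    rw [this] at hΨc0
    linarith
  set g := iN * kN with hgdef
  have hgpos : 0 < g := mul_pos hiN hkN
  have hW := wronskian n hc0
  set b : ℝ := (n:ℝ) + 1 with hb
  set W := Real.sqrt (c ^ 2 + b ^ 2) with hWdef
  have hWpos : 0 < W := Real.sqrt_pos.mpr (by positivity)
  have hW2 : W ^ 2 = c ^ 2 + b ^ 2 := Real.sq_sqrt (by positivity)
  -- g (kN^2 + kN1^2) = kN kN1 / c^2
  have hgk : g * (kN ^ 2 + kN1 ^ 2) = kN * kN1 / c ^ 2 := by
    have := congrArg (fun x => x * (kN * kN1)) hW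
    calc g * (kN ^ 2 + kN1 ^ 2)
        = (iN * kN1) * (kN * kN1) + (iN1 * kN) * (kN * kN1) - kN ^ 2 * (iN1 * kN1 - iN * kN) := by
          ring
      _ = kN * kN1 / c ^ 2 := by
          rw [hg]
          calc (iN * kN1) * (kN * kN1) + (iN1 * kN) * (kN * kN1) - kN ^ 2 * (iN * kN - iN * kN)
              = (iN * kN1 + iN1 * kN) * (kN * kN1) := by ring
            _ = kN * kN1 / c ^ 2 := by rw [hW]; ring
  -- 1 < 2 W c g
  have hkey : 1 < 2 * W * c * g := by
    have hcross := sbK_cross n hc0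
    have hsum : (0:ℝ) < kN ^ 2 + kN1 ^ 2 := by positivity
    -- c (kN²+kN1²) < 2W kN kN1 = 2W c² g (kN²+kN1²)
    have h2 : kN * kN1 = c ^ 2 * (g * (kN ^ 2 + kN1 ^ 2)) := by
      rw [hgk]; field_simp
    rw [h2] at hcross
    have h3 : c * (kN ^ 2 + kN1 ^ 2) < (2 * W * c ^ 2 * g) * (kN ^ 2 + kN1 ^ 2) := by
      calc c * (kN ^ 2 + kN1 ^ 2) < 2 * W * (c ^ 2 * (g * (kN ^ 2 + kN1 ^ 2))) := hcross
        _ = (2 * W * c ^ 2 * g) * (kN ^ 2 + kN1 ^ 2) := by ring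
    have h4 : c < 2 * W * c ^ 2 * g := lt_of_mul_lt_mul_right (by
      calc c * (kN ^ 2 + kN1 ^ 2) < (2 * W * c ^ 2 * g) * (kN ^ 2 + kN1 ^ 2) := h3) hsum.le
    have : c * 1 < c * (2 * W * c * g) := by
      calc c * 1 = c := by ring
        _ < 2 * W * c ^ 2 * g := h4
        _ = c * (2 * W * c * g) := by ring
    exact lt_of_mul_lt_mul_left this hc0.le
  -- D c = 2 (v - u) + (4n+4) g / c
  set u := iN * kN1 with hu
  set v := iN1 * kN with hv
  have hDval : D c = 2 * (v - u) + (4 * (n:ℝ) + 4) * g / c := by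
    have e1 : sbI (n + 1 + 1) c = iN - ((2 * ((n:ℝ) + 1) + 1) / c) * iN1 := sbI_two_step n c
    have e2 : sbK (n + 1 + 1) c = kN + ((2 * ((n:ℝ) + 1) + 1) / c) * kN1 := sbK_two_step n c
    simp only [hD, e1, e2, hu, hv, hgdef]
    push_cast
    linear_combination ((2 * (n:ℝ) + 4) / c) * hg
  -- positivity of D c
  have huv : u * v = g ^ 2 := by
    rw [hu, hv, hgdef]
    calc iN * kN1 * (iN1 * kN) = (iN1 * kN1) * (iN * kN) := by ring
      _ = (iN * kN) ^ 2 := by rw [hg]; ring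
  have hsumuv : u + v = 1 / c ^ 2 := hW
  have hDpos : 0 < D c := by
    rw [hDval]
    set t := 2 * b * g / c with ht
    have htpos : 0 < t := by rw [ht]; positivity
    have h1 : 1 < (2 * W * c * g) ^ 2 := one_lt_pow₀ hkey (by norm_num)
    have h2 : (2 * W * c * g) ^ 2 = 4 * (c ^ 2 + b ^ 2) * c ^ 2 * g ^ 2 := by
      rw [show (2 * W * c * g) ^ 2 = 4 * W ^ 2 * c ^ 2 * g ^ 2 by ring, hW2]
    have h3 : 1 < 4 * (c ^ 2 + b ^ 2) * c ^ 2 * g ^ 2 := by rw [h2] at h1; exact h1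
    have hc4 : (0:ℝ) < c ^ 4 := by positivity
    have hfinal : (1 / c ^ 2) ^ 2 - 4 * g ^ 2 < (2 * b * g / c) ^ 2 := by
      have key2 : c ^ 4 * ((1 / c ^ 2) ^ 2 - 4 * g ^ 2) < c ^ 4 * ((2 * b * g / c) ^ 2) := by
        have e1 : c ^ 4 * ((1 / c ^ 2) ^ 2 - 4 * g ^ 2) = 1 - 4 * g ^ 2 * c ^ 4 := by
          field_simp
        have e2 : c ^ 4 * ((2 * b * g / c) ^ 2) = 4 * b ^ 2 * g ^ 2 * c ^ 2 := by
          field_simp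
          ring
        have h4 : 4 * (c ^ 2 + b ^ 2) * c ^ 2 * g ^ 2
            = 4 * g ^ 2 * c ^ 4 + 4 * b ^ 2 * g ^ 2 * c ^ 2 := by ring
        rw [e1, e2]
        rw [h4] at h3
        linarith
      exact lt_of_mul_lt_mul_left key2 (le_of_lt hc4)
    have hsq : (u - v) ^ 2 < t ^ 2 := by
      have e : (u - v) ^ 2 = (u + v) ^ 2 - 4 * (u * v) := by ring
      rw [e, hsumuv, huv, ht]
      exact hfinal
    have habs : u - v < t := by
      have h5 : |u - v| ^ 2 < t ^ 2 := by rw [sq_abs]; exact hsq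
      have h6 : |u - v| < t := lt_of_pow_lt_pow_left₀ 2 htpos.le h5
      exact lt_of_le_of_lt (le_abs_self _) h6
    have : 2 * (v - u) + 2 * t > 0 := by linarith
    calc (0:ℝ) < 2 * (v - u) + 2 * t := this
      _ = 2 * (v - u) + (4 * b * g / c) := by rw [ht]; ring
      _ = 2 * (v - u) + (4 * (n:ℝ) + 4) * g / c := by rw [hb]; ring
  -- contradiction via slope from the left
  have hslope : Tendsto (slope Ψ c) (𝓝[<] c) (𝓝 (D c)) := by
    have := hasDerivAt_iff_tendsto_slope.mp (hΨd c hc0)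
    exact this.mono_left (nhdsWithin_mono c (fun t ht => ne_of_lt ht))
  have hDle : D c ≤ 0 := by
    refine le_of_tendsto hslope ?_
    filter_upwards [Ioo_mem_nhdsLT (show (0:ℝ) < c from hc0)] with t ht
    have hΨt : 0 < Ψ t := hbelow t ht.1 ht.2
    have : slope Ψ c t = (Ψ t - Ψ c) / (t - c) := by
      rw [slope_def_field]
    rw [this, hΨc0, sub_zero]
    apply le_of_lt
    apply div_neg_of_pos_of_neg hΨt
    linarith [ht.2]
  linarith

lemma gIK_le (m : ℕ) {z : ℝ} (hz : 0 < z) :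
    sbI m z * sbK m z ≤ sbI 0 z * sbK 0 z := by
  induction m with
  | zero => exact le_refl _
  | succ k ih => exact (le_of_lt (psi_pos k hz)).trans ih

lemma gIK_zero {z : ℝ} (hz : 0 < z) :
    z ^ 2 * (sbI 0 z * sbK 0 z) = (1 - Real.exp (-2 * z)) / 2 := by
  show z ^ 2 * (Real.sinh z / z * (Real.exp (-z) / z)) = _
  rw [Real.sinh_eq]
  rw [show -2 * z = -z + -z by ring, Real.exp_add, Real.exp_neg]
  field_simp [Real.exp_ne_zero]

/-- For `M = √(m²-a²)` with `m > 0`, `a ∈ (-m, m)`, and every `n ≥ 1`: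
`1/4 - M² d_n(M) d_{n-1}(M) ≥ (1/4) e^{-2M} (2 - e^{-2M})`, the lower bound for the
squared moduli `|p_{j±1/2}|²` of the eigenvalues of `W^a`. -/
theorem p_squared_lower_bound (m a : ℝ) (hm : 0 < m) (ha : a ∈ Set.Ioo (-m) m)
    (n : ℕ) (hn : 1 ≤ n) :
    1 / 4 - (Real.sqrt (m ^ 2 - a ^ 2)) ^ 2 *
        dCoef n (Real.sqrt (m ^ 2 - a ^ 2)) * dCoef (n - 1) (Real.sqrt (m ^ 2 - a ^ 2)) ≥
      (1 / 4) * Real.exp (-2 * Real.sqrt (m ^ 2 - a ^ 2)) *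
        (2 - Real.exp (-2 * Real.sqrt (m ^ 2 - a ^ 2))) := by
  obtain ⟨ha1, ha2⟩ := ha
  have hpos : 0 < m ^ 2 - a ^ 2 := by nlinarith [sq_lt_sq' ha1 ha2]
  set M := Real.sqrt (m ^ 2 - a ^ 2) with hM
  have hMpos : 0 < M := Real.sqrt_pos.mpr hpos
  obtain ⟨k, rfl⟩ : ∃ k, n = k + 1 := ⟨n - 1, by omega⟩
  have hsub : k + 1 - 1 = k := rfl
  rw [hsub]
  set q := Real.exp (-2 * M) with hq
  have hq1 : q < 1 := by
    rw [hq, Real.exp_lt_one_iff]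
    nlinarith [hMpos]
  have hqpos : 0 < q := Real.exp_pos _
  -- the product bound
  have hA := gIK_le (k + 1) hMpos
  have hB := gIK_le k hMpos
  have hApos : 0 < sbI (k + 1) M * sbK (k + 1) M :=
    mul_pos (sbI_pos _ hMpos) (sbK_pos _ hMpos)
  have hBpos : 0 < sbI k M * sbK k M := mul_pos (sbI_pos _ hMpos) (sbK_pos _ hMpos)
  have hCpos : 0 < sbI 0 M * sbK 0 M := mul_pos (sbI_pos _ hMpos) (sbK_pos _ hMpos)
  have hprod : (sbI (k+1) M * sbK (k+1) M) * (sbI k M * sbK k M) ≤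
      (sbI 0 M * sbK 0 M) * (sbI 0 M * sbK 0 M) :=
    mul_le_mul hA hB (le_of_lt hBpos) (le_of_lt hCpos)
  have hMsq : M ^ 2 = m ^ 2 - a ^ 2 := Real.sq_sqrt (le_of_lt hpos)
  have hC := gIK_zero hMpos
  have key : M ^ 2 * dCoef (k + 1) M * dCoef k M ≤ ((1 - q) / 2) ^ 2 := by
    have e : M ^ 2 * dCoef (k + 1) M * dCoef k M
        = (M ^ 2 * (sbI (k+1) M * sbK (k+1) M)) * (M ^ 2 * (sbI k M * sbK k M)) := by
      simp only [dCoef]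
      ring
    rw [e]
    calc (M ^ 2 * (sbI (k+1) M * sbK (k+1) M)) * (M ^ 2 * (sbI k M * sbK k M))
        ≤ (M ^ 2 * (sbI 0 M * sbK 0 M)) * (M ^ 2 * (sbI 0 M * sbK 0 M)) := by
          have h2 : (0:ℝ) < M ^ 2 := by positivity
          calc (M ^ 2 * (sbI (k+1) M * sbK (k+1) M)) * (M ^ 2 * (sbI k M * sbK k M))
              = M ^ 2 * M ^ 2 * ((sbI (k+1) M * sbK (k+1) M) * (sbI k M * sbK k M)) := by ring
            _ ≤ M ^ 2 * M ^ 2 * ((sbI 0 M * sbK 0 M) * (sbI 0 M * sbK 0 M)) := by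
                apply mul_le_mul_of_nonneg_left hprod (by positivity)
            _ = (M ^ 2 * (sbI 0 M * sbK 0 M)) * (M ^ 2 * (sbI 0 M * sbK 0 M)) := by ring
      _ = ((1 - q) / 2) ^ 2 := by rw [hC]; rw [← hq]; ring
  -- conclude
  rw [ge_iff_le, hM] at *
  nlinarith [key, hq1, hqpos]
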